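/- Channel-wise layer composition for deep S4 models with linear activations: let L = D and construct L layers where in layer l only channel l has a nonzero S4 kernel K* (equal to the target model's channel-l kernel), W_l = I, β_l = 0, and the residual weight u_l has entry 0 in position l and 1 elsewhere. Then after L−1 layers the intermediate output at channel d < L equals the target channel-d S4 output and channel L carries the original input; applying in the final layer W_L = W*, β_L = β*, u_L = 0, and the target kernel on channel L reproduces exactly the target one-layer deep S4 model's output W*·(S4*_t(x))_{d=1}^D + β* on every input sequence. -/
import Mathlib


open Matrix

/-- A deep S4 layer with linear activation:
`z'_{d,t} = (W·conv_K(z)_t)_d + β_d + u_d z_{d,t}`, where `conv` is the causal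
convolution of each channel with its kernel. -/
noncomputable def s4LinLayer {D : ℕ} (K : Fin D → ℕ → ℝ)
    (W : Matrix (Fin D) (Fin D) ℝ) (β u : Fin D → ℝ)
    (z : Fin D → ℕ → ℝ) : Fin D → ℕ → ℝ :=
  fun d t =>
    W.mulVec (fun d' => ∑ m ∈ Finset.Icc 1 t, K d' (t - m) * z d' m) d
      + β d + u d * z d t

/-- The SDLoRA construction with `L = D` layers: layer `l` (0-indexed) applies the
target kernel `K*` on channel `l` only, with `W = I`, `β = 0`, residual weight `0` at
channel `l` and `1` elsewhere; the final layer (`l = D−1`) uses `W*`, `β*`, no residual,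
the target kernel on channel `D−1` and identity (delta) kernels on the other channels. -/
noncomputable def zseq {D : ℕ} (Kstar : Fin D → ℕ → ℝ)
    (Wstar : Matrix (Fin D) (Fin D) ℝ) (βstar : Fin D → ℝ)
    (x : Fin D → ℕ → ℝ) : ℕ → Fin D → ℕ → ℝ
  | 0 => x
  | l + 1 =>
      s4LinLayer
        (fun d n =>
          if (d : ℕ) = l then Kstar d n
          else if l = D - 1 then (if n = 0 then 1 else 0) else 0)
        (if l = D - 1 then Wstar else 1)
        (if l = D - 1 then βstar else 0)
        (fun d => if l = D - 1 then 0 else if (d : ℕ) = l then 0 else 1)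
        (zseq Kstar Wstar βstar x l)

lemma zseq_aux {D : ℕ} (Kstar : Fin D → ℕ → ℝ) (Wstar : Matrix (Fin D) (Fin D) ℝ)
    (βstar : Fin D → ℝ) (x : Fin D → ℕ → ℝ) :
    ∀ l, l ≤ D - 1 → ∀ (d : Fin D) (t : ℕ),
      zseq Kstar Wstar βstar x l d t =
        if (d : ℕ) < l then ∑ m ∈ Finset.Icc 1 t, Kstar d (t - m) * x d m
        else x d t := by
  intro l
  induction l with
  | zero => intro _ d t; simp [zseq]
  | succ l ih =>
    intro hl d t
    have hl' : l ≠ D - 1 := by omega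
    have hle : l ≤ D - 1 := by omega
    simp only [zseq, s4LinLayer, if_neg hl', one_mulVec, Pi.zero_apply, add_zero]
    by_cases hd : (d : ℕ) = l
    · have hx : ∀ m, zseq Kstar Wstar βstar x l d m = x d m := fun m => by
        rw [ih hle d m, if_neg (by omega)]
      simp only [if_pos hd, zero_mul, add_zero, hx]
      rw [if_pos (by omega)]
    · simp only [if_neg hd, zero_mul, Finset.sum_const_zero, one_mul, zero_add]
      rw [ih hle d t]
      have h2 : ((d : ℕ) < l + 1) ↔ ((d : ℕ) < l) := by omega
      simp [h2]

/-- Channel-wise layer composition for deep S4 models with linear activations: after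
`L−1 = D−1` layers each channel `d < D−1` carries the target channel-`d` S4 output and
channel `D−1` carries the original input; the final layer reproduces the target
one-layer deep S4 model `W*·(S4*_t(x)) + β*` on every input sequence. -/
theorem stmt15 {D : ℕ} (hD : 0 < D) (Kstar : Fin D → ℕ → ℝ)
    (Wstar : Matrix (Fin D) (Fin D) ℝ) (βstar : Fin D → ℝ) (x : Fin D → ℕ → ℝ) :
    (∀ d : Fin D, (d : ℕ) < D - 1 → ∀ t : ℕ,
      zseq Kstar Wstar βstar x (D - 1) d t
        = ∑ m ∈ Finset.Icc 1 t, Kstar d (t - m) * x d m) ∧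
    (∀ d : Fin D, (d : ℕ) = D - 1 → ∀ t : ℕ,
      zseq Kstar Wstar βstar x (D - 1) d t = x d t) ∧
    (∀ (d : Fin D) (t : ℕ),
      zseq Kstar Wstar βstar x D d t
        = Wstar.mulVec
            (fun d' => ∑ m ∈ Finset.Icc 1 t, Kstar d' (t - m) * x d' m) d
          + βstar d) := by
  obtain ⟨D', rfl⟩ := Nat.exists_eq_succ_of_ne_zero hD.ne'
  have hD1 : D' + 1 - 1 = D' := rfl
  have aux := zseq_aux Kstar Wstar βstar x D' (le_of_eq hD1.symm)
  refine ⟨fun d hd t => by rw [show D' + 1 - 1 = D' from rfl, aux d t, if_pos (by omega)],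
          fun d hd t => by rw [show D' + 1 - 1 = D' from rfl, aux d t, if_neg (by omega)], ?_⟩
  intro d t
  show zseq Kstar Wstar βstar x (D' + 1) d t = _
  simp only [zseq, s4LinLayer, hD1, eq_self_iff_true, if_true, zero_mul, add_zero]
  congr 1
  congr 1
  funext d'
  by_cases hd' : (d' : ℕ) = D'
  · have hx : ∀ m, zseq Kstar Wstar βstar x D' d' m = x d' m := fun m => by
      rw [aux d' m, if_neg (by omega)]
    simp [hd', hx]
  · have hlt : (d' : ℕ) < D' := by omega
    simp only [if_neg hd']
    have hterm : ∀ m ∈ Finset.Icc 1 t,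
        (if t - m = 0 then (1:ℝ) else 0) * zseq Kstar Wstar βstar x D' d' m
          = if m = t then zseq Kstar Wstar βstar x D' d' m else 0 := by
      intro m hm
      simp only [Finset.mem_Icc] at hm
      by_cases h : m = t
      · subst h; simp
      · rw [if_neg h, if_neg (by omega), zero_mul]
    rw [Finset.sum_congr rfl hterm, Finset.sum_ite_eq' (Finset.Icc 1 t) t]
    by_cases ht : t = 0
    · subst ht; simp
    · rw [if_pos (by simp [Finset.mem_Icc]; omega), aux d' t, if_pos hlt]
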